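/- There is a constant C > 0 such that for every ω ≥ 1 and every Schwartz function f on ℝ³ = ℝ² × ℝ (variables (x,z)), one has ‖∇f‖²_{L²(ℝ³)} ≤ C ω E_ω(f). -/

import Mathlib

/-! Integrating `∂_z (z ‖f‖²) = ‖f‖² + 2 ⟪z f, ∂_z f⟫` in `z` gives
`‖f‖² = -2 ∫ ⟪z f, ∂_z f⟫`, so expanding `‖∂_z f + ω z f‖² ≥ 0` yields the oscillator bound
`ω ‖f‖² ≤ ‖∂_z f‖² + ω² ‖z f‖²`. Hence `E_ω(f) ≥ ‖f‖² + ‖∇ₓ f‖²` and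
`‖∂_z f‖² ≤ E_ω(f) + (ω - 1) ‖f‖² ≤ ω E_ω(f)`, so `C = 2` works. -/

open MeasureTheory Complex

noncomputable section

/-- ℝ² with the Euclidean norm. -/
abbrev R2 : Type := EuclideanSpace ℝ (Fin 2)

/-- ℝ³ written as ℝ² × ℝ, points r = (x, z). -/
abbrev R3 : Type := R2 × ℝ

/-- Directional derivative of `f` at `p` in the direction `v`. -/
def pd {E F : Type*} [NormedAddCommGroup E] [NormedSpace ℝ E]
    [NormedAddCommGroup F] [NormedSpace ℝ F] (v : E) (f : E → F) (p : E) : F :=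
  fderiv ℝ f p v

/-- First coordinate direction in the x-plane. -/
def ex0 : R3 := (EuclideanSpace.single 0 1, 0)

/-- Second coordinate direction in the x-plane. -/
def ex1 : R3 := (EuclideanSpace.single 1 1, 0)

/-- The z-direction. -/
def ez : R3 := (0, 1)

/-- The quadratic form
`E_ω(f) = ‖f‖² + ‖∇ₓf‖² + ‖∂_z f‖² + ω²‖z f‖² − ω‖f‖²` on L²(ℝ³). -/
def Eform (ω : ℝ) (f : R3 → ℂ) : ℝ :=
  (∫ p : R3, ‖f p‖ ^ 2) +
    ((∫ p : R3, ‖pd ex0 f p‖ ^ 2) + (∫ p : R3, ‖pd ex1 f p‖ ^ 2)) +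
    (∫ p : R3, ‖pd ez f p‖ ^ 2) +
    ω ^ 2 * (∫ p : R3, p.2 ^ 2 * ‖f p‖ ^ 2) -
    ω * (∫ p : R3, ‖f p‖ ^ 2)

open scoped RealInnerProductSpace SchwartzMap LineDeriv

theorem integral_prod_eq_zero_of_hasDerivAt_snd {X E : Type*} [MeasurableSpace X] {μ : Measure X}
    [SFinite μ] [NormedAddCommGroup E] [NormedSpace ℝ E] {g g' : X × ℝ → E}
    (hderiv : ∀ x t, HasDerivAt (fun t ↦ g (x, t)) (g' (x, t)) t)
    (hg' : Integrable g' (μ.prod volume)) (hg : Integrable g (μ.prod volume)) :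
    ∫ p, g' p ∂μ.prod volume = 0 := by
  rw [integral_prod g' hg']
  refine integral_eq_zero_of_ae ?_
  filter_upwards [hg'.prod_right_ae, hg.prod_right_ae] with x hg'x hgx
  exact integral_eq_zero_of_hasDerivAt_of_integrable (hderiv x) hg'x hgx

theorem neg_two_mul_mul_inner_le {F : Type*} [NormedAddCommGroup F] [InnerProductSpace ℝ F]
    (ω : ℝ) (u v : F) : -2 * ω * ⟪u, v⟫ ≤ ‖v‖ ^ 2 + ω ^ 2 * ‖u‖ ^ 2 := by
  have h := norm_add_sq_real v (ω • u)
  rw [norm_smul, real_inner_smul_right, real_inner_comm, Real.norm_eq_abs, mul_pow, sq_abs] at h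
  nlinarith [sq_nonneg ‖v + ω • u‖]

namespace SchwartzMap

section Integrable

variable {E F : Type*} [NormedAddCommGroup E] [NormedSpace ℝ E] [MeasurableSpace E] [BorelSpace E]
  [SecondCountableTopology E] [NormedAddCommGroup F] [InnerProductSpace ℝ F]
  (μ : Measure E) [μ.HasTemperateGrowth]

theorem integrable_inner (f g : 𝓢(E, F)) : Integrable (fun x ↦ ⟪f x, g x⟫) μ :=
  (L2.integrable_inner (f.toLp 2 μ) (g.toLp 2 μ)).congr <| by
    filter_upwards [f.coeFn_toLp 2 μ, g.coeFn_toLp 2 μ] with x hfx hgx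
    rw [hfx, hgx]

theorem integrable_norm_sq (f : 𝓢(E, F)) : Integrable (fun x ↦ ‖f x‖ ^ 2) μ :=
  (memLp_two_iff_integrable_sq_norm f.continuous.aestronglyMeasurable).mp (f.memLp 2 μ)

end Integrable

section Oscillator

variable {X F : Type*} [NormedAddCommGroup X] [NormedSpace ℝ X] [NormedAddCommGroup F]
  [InnerProductSpace ℝ F]

theorem hasDerivAt_snd (f : 𝓢(X × ℝ, F)) (x : X) (t : ℝ) :
    HasDerivAt (fun t ↦ f (x, t)) (∂_{((0 : X), (1 : ℝ))} f (x, t)) t :=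
  (f.hasFDerivAt (x, t)).comp_hasDerivAt t ((hasDerivAt_const t x).prodMk (hasDerivAt_id t))

theorem smulLeftCLM_snd_apply (f : 𝓢(X × ℝ, F)) (p : X × ℝ) :
    smulLeftCLM F (fun p : X × ℝ ↦ p.2) f p = p.2 • f p :=
  smulLeftCLM_apply_apply (ContinuousLinearMap.snd ℝ X ℝ).hasTemperateGrowth f p

variable [FiniteDimensional ℝ X] [MeasurableSpace X] [BorelSpace X] {μ : Measure X}
  [μ.IsAddHaarMeasure]

theorem integral_norm_sq_eq_neg_two_mul_integral_inner_smul_lineDerivOp (f : 𝓢(X × ℝ, F)) :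
    ∫ p, ‖f p‖ ^ 2 ∂μ.prod volume =
      -2 * ∫ p, ⟪p.2 • f p, ∂_{((0 : X), (1 : ℝ))} f p⟫ ∂μ.prod volume := by
  set zf := smulLeftCLM F (fun p : X × ℝ ↦ p.2) f
  have hderiv : ∀ x t, HasDerivAt (fun t ↦ ⟪zf (x, t), f (x, t)⟫)
      (‖f (x, t)‖ ^ 2 + 2 * ⟪zf (x, t), ∂_{((0 : X), (1 : ℝ))} f (x, t)⟫) t := by
    intro x t
    simp only [zf, smulLeftCLM_snd_apply, real_inner_smul_left, real_inner_self_eq_norm_sq]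
    exact ((hasDerivAt_id' t).mul (f.hasDerivAt_snd x t).norm_sq).congr_deriv (by ring)
  have hf := f.integrable_norm_sq (μ.prod volume)
  have hzf := (zf.integrable_inner (μ.prod volume) (∂_{((0 : X), (1 : ℝ))} f)).const_mul 2
  have hvanish : ∫ p, (‖f p‖ ^ 2 + 2 * ⟪zf p, ∂_{((0 : X), (1 : ℝ))} f p⟫) ∂μ.prod volume = 0 :=
    integral_prod_eq_zero_of_hasDerivAt_snd hderiv (hf.add hzf) (zf.integrable_inner _ f)
  rw [integral_add hf hzf, integral_const_mul] at hvanish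
  simp only [zf, smulLeftCLM_snd_apply] at hvanish
  linarith

theorem mul_integral_norm_sq_le_oscillator (ω : ℝ) (f : 𝓢(X × ℝ, F)) :
    ω * ∫ p, ‖f p‖ ^ 2 ∂μ.prod volume ≤
      ∫ p, ‖∂_{((0 : X), (1 : ℝ))} f p‖ ^ 2 ∂μ.prod volume +
        ω ^ 2 * ∫ p, p.2 ^ 2 * ‖f p‖ ^ 2 ∂μ.prod volume := by
  set zf := smulLeftCLM F (fun p : X × ℝ ↦ p.2) f
  have hnorm : ∀ p : X × ℝ, p.2 ^ 2 * ‖f p‖ ^ 2 = ‖zf p‖ ^ 2 := fun p ↦ by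
    rw [smulLeftCLM_snd_apply, norm_smul, Real.norm_eq_abs, mul_pow, sq_abs]
  simp only [hnorm]
  have hdf := (∂_{((0 : X), (1 : ℝ))} f).integrable_norm_sq (μ.prod volume)
  have hzf := zf.integrable_norm_sq (μ.prod volume)
  calc ω * ∫ p, ‖f p‖ ^ 2 ∂μ.prod volume
      = ∫ p, -2 * ω * ⟪zf p, ∂_{((0 : X), (1 : ℝ))} f p⟫ ∂μ.prod volume := by
        rw [integral_const_mul, integral_norm_sq_eq_neg_two_mul_integral_inner_smul_lineDerivOp]
        simp only [zf, smulLeftCLM_snd_apply]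
        ring
    _ ≤ ∫ p, (‖∂_{((0 : X), (1 : ℝ))} f p‖ ^ 2 + ω ^ 2 * ‖zf p‖ ^ 2) ∂μ.prod volume :=
        integral_mono ((zf.integrable_inner _ _).const_mul _) (hdf.add (hzf.const_mul _))
          fun p ↦ neg_two_mul_mul_inner_le ω _ _
    _ = _ := by rw [integral_add hdf (hzf.const_mul _), integral_const_mul]

end Oscillator

end SchwartzMap

/-- there is `C > 0` such that, for every `ω ≥ 1` and every Schwartz
function `f` on ℝ³, `‖∇f‖²_{L²} ≤ C ω E_ω(f)`. -/
theorem gradient_bound_by_energy_form :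
    ∃ C : ℝ, 0 < C ∧ ∀ ω : ℝ, 1 ≤ ω → ∀ f : SchwartzMap R3 ℂ,
      (∫ p : R3, ‖pd ex0 (⇑f) p‖ ^ 2) + (∫ p : R3, ‖pd ex1 (⇑f) p‖ ^ 2) +
          (∫ p : R3, ‖pd ez (⇑f) p‖ ^ 2) ≤
        C * ω * Eform ω (⇑f) := by
  refine ⟨2, two_pos, fun ω hω f ↦ ?_⟩
  have hosc : ω * ∫ p : R3, ‖f p‖ ^ 2 ≤
      (∫ p : R3, ‖pd ez (⇑f) p‖ ^ 2) + ω ^ 2 * ∫ p : R3, p.2 ^ 2 * ‖f p‖ ^ 2 :=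
    f.mul_integral_norm_sq_le_oscillator ω
  have hf : 0 ≤ ∫ p : R3, ‖f p‖ ^ 2 := integral_nonneg fun p ↦ by positivity
  have hZ : 0 ≤ ω ^ 2 * ∫ p : R3, p.2 ^ 2 * ‖f p‖ ^ 2 :=
    mul_nonneg (sq_nonneg ω) (integral_nonneg fun p ↦ by positivity)
  have hdx : 0 ≤ (∫ p : R3, ‖pd ex0 (⇑f) p‖ ^ 2) + ∫ p : R3, ‖pd ex1 (⇑f) p‖ ^ 2 :=
    add_nonneg (integral_nonneg fun p ↦ by positivity) (integral_nonneg fun p ↦ by positivity)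
  have hE : (∫ p : R3, ‖f p‖ ^ 2) + ((∫ p : R3, ‖pd ex0 (⇑f) p‖ ^ 2) +
      ∫ p : R3, ‖pd ex1 (⇑f) p‖ ^ 2) ≤ Eform ω f := by
    unfold Eform; linarith
  have hdz : ∫ p : R3, ‖pd ez (⇑f) p‖ ^ 2 ≤ Eform ω f + (ω - 1) * ∫ p : R3, ‖f p‖ ^ 2 := by
    unfold Eform; linarith
  have hfE : ∫ p : R3, ‖f p‖ ^ 2 ≤ Eform ω f := by linarith
  nlinarith [mul_le_mul_of_nonneg_left hfE (sub_nonneg.2 hω)]
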